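/- Let K be a field of characteristic 0, (R, m) a parameter K-algebra, V a K-module, and M := R ⊗̂ V, with augmentation π : M → V induced by R → K. Let g : M → M be an R-linear automorphism such that π ∘ g = π. Then there exists a unique R-linear endomorphism γ of M with γ(M) ⊆ mM such that g = exp(γ), in the sense that for every x ∈ M and every n ≥ 0 one has g(x) − Σ_{i=0}^{n} γ^i(x)/i! ∈ m^{n+1} M. (Note that γ(m^j M) ⊆ m^{j+1} M for all j, so γ^i(x) ∈ m^i M and the series Σ_{i≥0} γ^i(x)/i! converges in the m-adically complete module M.) -/

import Mathlib

set_option maxHeartbeats 1600000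

universe u
open TensorProduct

section CompletedTensor

variable (K : Type u) [Field K]
variable (R : Type u) [CommRing R] [Algebra K R] (m : Ideal R)
variable (V : Type u) [AddCommGroup V] [Module K V]

/-- The transition maps `(R/𝔪^{i+2}) ⊗_K V → (R/𝔪^{i+1}) ⊗_K V`. -/
noncomputable def modTransition (i : ℕ) :
    ((R ⧸ (m ^ (i + 2))) ⊗[K] V) →ₗ[R] ((R ⧸ (m ^ (i + 1))) ⊗[K] V) :=
  AlgebraTensorModule.map
    (Submodule.mapQ _ _ LinearMap.id
      (fun x hx => Ideal.pow_le_pow_right (Nat.le_succ _) hx))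
    LinearMap.id

/-- `R ⊗̂ V`, the `𝔪`-adic completion of `R ⊗_K V`, realized concretely as the
`R`-module of compatible families in `∏_i (R/𝔪^{i+1}) ⊗_K V`. -/
noncomputable def completedTensor : Submodule R (∀ i : ℕ, (R ⧸ (m ^ (i + 1))) ⊗[K] V) where
  carrier := {f | ∀ i, modTransition K R m V i (f (i + 1)) = f i}
  add_mem' := fun hf hg i => by simp only [Pi.add_apply, map_add]; rw [hf i, hg i]
  zero_mem' := fun i => by simp only [Pi.zero_apply, map_zero]
  smul_mem' := fun r f hf i => by simp only [Pi.smul_apply, map_smul]; rw [hf i]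

noncomputable instance completedTensor.addCommGroup' : AddCommGroup (completedTensor K R m V) :=
  Submodule.addCommGroup _

/-- the transition map on quotients -/
noncomputable def qmap (i : ℕ) : (R ⧸ (m ^ (i + 2))) →ₗ[R] (R ⧸ (m ^ (i + 1))) :=
  Submodule.mapQ _ _ LinearMap.id (fun x hx => Ideal.pow_le_pow_right (Nat.le_succ _) hx)

lemma qmap_mk (i : ℕ) (x : R) :
    qmap R m i (Submodule.Quotient.mk x) = Submodule.Quotient.mk x :=
  Submodule.mapQ_apply _ _ _ x

/-- `levelIso`: the `i`-th level as a finsupp over a basis of `V`. -/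
noncomputable def levelIso (i : ℕ) :
    ((R ⧸ (m ^ (i + 1))) ⊗[K] V) ≃ₗ[R] ((Module.Basis.ofVectorSpaceIndex K V) →₀ (R ⧸ (m ^ (i + 1)))) := by
  classical
  exact
  { toFun := (TensorProduct.equivFinsuppOfBasisRight (M := R ⧸ (m ^ (i + 1)))
      (Module.Basis.ofVectorSpace K V) : _ → _)
    map_add' := map_add _
    map_smul' := by
      intro r x
      simp only [RingHom.id_apply]
      induction x using TensorProduct.induction_on with
      | zero => simp
      | tmul a v =>
          rw [TensorProduct.smul_tmul']
          ext t
          rw [Finsupp.smul_apply, TensorProduct.equivFinsuppOfBasisRight_apply_tmul_apply,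
            TensorProduct.equivFinsuppOfBasisRight_apply_tmul_apply, smul_comm]
      | add y z hy hz => rw [smul_add, map_add, hy, hz, map_add, smul_add]
    invFun := (TensorProduct.equivFinsuppOfBasisRight (Module.Basis.ofVectorSpace K V)).symm
    left_inv := (TensorProduct.equivFinsuppOfBasisRight (Module.Basis.ofVectorSpace K V)).left_inv
    right_inv := (TensorProduct.equivFinsuppOfBasisRight (Module.Basis.ofVectorSpace K V)).right_inv }

lemma levelIso_tmul (i : ℕ) (a : R ⧸ (m ^ (i + 1))) (v : V) (t) :
    levelIso K R m V i (a ⊗ₜ[K] v) t = (Module.Basis.ofVectorSpace K V).repr v t • a := by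
  classical
  show (TensorProduct.equivFinsuppOfBasisRight (Module.Basis.ofVectorSpace K V)) (a ⊗ₜ[K] v) t = _
  rw [TensorProduct.equivFinsuppOfBasisRight_apply_tmul_apply]

lemma modTransition_eq (i : ℕ) :
    modTransition K R m V i = AlgebraTensorModule.map (qmap R m i) LinearMap.id := rfl

lemma levelIso_transition (i : ℕ) (x : (R ⧸ (m ^ (i + 2))) ⊗[K] V) (t) :
    levelIso K R m V i (modTransition K R m V i x) t
      = qmap R m i (levelIso K R m V (i + 1) x t) := by
  induction x using TensorProduct.induction_on with
  | zero => simp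
  | tmul a v =>
      rw [modTransition_eq, AlgebraTensorModule.map_tmul, levelIso_tmul, levelIso_tmul,
        LinearMap.id_apply]
      have h1 : ∀ (j : ℕ) (c : K) (b : R ⧸ (m ^ (j + 1))),
          c • b = (algebraMap K R c) • b := by
        intro j c b
        rw [algebraMap_smul]
      rw [h1, h1, map_smul]
  | add y z hy hz => simp [map_add, hy, hz]

lemma level_smul_zero (i : ℕ) (r : R) (hr : r ∈ m ^ (i + 1))
    (z : (R ⧸ (m ^ (i + 1))) ⊗[K] V) : r • z = 0 := by
  induction z using TensorProduct.induction_on with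
  | zero => simp
  | tmul a v =>
      obtain ⟨b, rfl⟩ := Submodule.Quotient.mk_surjective _ a
      rw [TensorProduct.smul_tmul', ← Submodule.Quotient.mk_smul]
      have : r • b ∈ m ^ (i + 1) := by
        rw [smul_eq_mul]
        exact Ideal.mul_mem_right b _ hr
      rw [(Submodule.Quotient.mk_eq_zero _).2 this, TensorProduct.zero_tmul]
  | add y z hy hz => rw [smul_add, hy, hz, add_zero]

/-- easy direction: elements of `m^k • ⊤` have vanishing components below level `k`. -/
lemma comps_zero_of_mem_smul (k : ℕ) (x : completedTensor K R m V)
    (hx : x ∈ (m ^ k) • (⊤ : Submodule R (completedTensor K R m V))) :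
    ∀ i, i + 1 ≤ k → (x : ∀ i : ℕ, (R ⧸ (m ^ (i + 1))) ⊗[K] V) i = 0 := by
  refine Submodule.smul_induction_on hx ?_ ?_
  · intro r hr y _ i hi
    have hr' : r ∈ m ^ (i + 1) := Ideal.pow_le_pow_right hi hr
    have hco : ((r • y : completedTensor K R m V) : ∀ i : ℕ, (R ⧸ (m ^ (i + 1))) ⊗[K] V)
        = r • (y : ∀ i : ℕ, (R ⧸ (m ^ (i + 1))) ⊗[K] V) := rfl
    rw [hco, Pi.smul_apply]
    exact level_smul_zero K R m V i r hr' _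
  · intro y z hy hz i hi
    have hco : ((y + z : completedTensor K R m V) : ∀ i : ℕ, (R ⧸ (m ^ (i + 1))) ⊗[K] V)
        = (y : ∀ i : ℕ, (R ⧸ (m ^ (i + 1))) ⊗[K] V) + (z : ∀ i : ℕ, _) := rfl
    rw [hco, Pi.add_apply, hy i hi, hz i hi, add_zero]

lemma ideal_smul_top (I : Ideal R) : I • (⊤ : Submodule R R) = I := by
  refine le_antisymm (Submodule.smul_le.2 fun r hr y _ => ?_) (fun x hx => ?_)
  · simpa [smul_eq_mul] using I.mul_mem_right y hr
  · simpa using Submodule.smul_mem_smul hx (Submodule.mem_top (x := (1 : R)))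

lemma liftCompat [IsAdicComplete m R] (c : ∀ i : ℕ, R ⧸ (m ^ (i + 1)))
    (hc : ∀ i, qmap R m i (c (i + 1)) = c i) :
    ∃ L : R, ∀ i, (Submodule.Quotient.mk L : R ⧸ (m ^ (i + 1))) = c i := by
  have hsur : ∀ i, ∃ y : R, (Submodule.Quotient.mk y : R ⧸ (m ^ (i + 1))) = c i :=
    fun i => Submodule.Quotient.mk_surjective _ (c i)
  choose r hr using hsur
  have key : ∀ i, r (i + 1) - r i ∈ m ^ (i + 1) := by
    intro i
    rw [← Submodule.Quotient.eq]
    have : (Submodule.Quotient.mk (r (i + 1)) : R ⧸ (m ^ (i + 1)))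
        = qmap R m i (Submodule.Quotient.mk (r (i + 1))) := (qmap_mk R m i _).symm
    rw [this, hr (i + 1), hc i, hr i]
  have chain : ∀ i j, i ≤ j → r j - r i ∈ m ^ (i + 1) := by
    intro i j hij
    induction j, hij using Nat.le_induction with
    | base => simpa using (m ^ (i + 1)).zero_mem
    | succ j hij ih =>
        have : r (j + 1) - r i = (r (j + 1) - r j) + (r j - r i) := by ring
        rw [this]
        exact Submodule.add_mem _ (Ideal.pow_le_pow_right (by omega) (key j)) ih
  have hcauchy : ∀ {a b : ℕ}, a ≤ b → r a ≡ r b [SMOD (m ^ a • ⊤ : Submodule R R)] := by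
    intro a b hab
    rw [SModEq.sub_mem, ideal_smul_top]
    have h : r a - r b ∈ m ^ (a + 1) := by
      have := (m ^ (a + 1)).neg_mem (chain a b hab)
      simpa using this
    exact Ideal.pow_le_pow_right (Nat.le_succ a) h
  obtain ⟨L, hL⟩ := IsPrecomplete.prec (IsAdicComplete.toIsPrecomplete) @hcauchy
  refine ⟨L, fun i => ?_⟩
  have h1 : r (i + 1) - L ∈ m ^ (i + 1) := by
    have := hL (i + 1)
    rwa [SModEq.sub_mem, ideal_smul_top] at this
  have h2 : (Submodule.Quotient.mk L : R ⧸ (m ^ (i + 1))) = Submodule.Quotient.mk (r (i + 1)) := by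
    rw [Submodule.Quotient.eq]
    simpa using Submodule.neg_mem _ h1
  rw [h2]
  have : (Submodule.Quotient.mk (r (i + 1)) : R ⧸ (m ^ (i + 1)))
      = qmap R m i (Submodule.Quotient.mk (r (i + 1))) := (qmap_mk R m i _).symm
  rw [this, hr (i + 1), hc i]

lemma ext_coords (x y : completedTensor K R m V)
    (h : ∀ i t, levelIso K R m V i ((x : ∀ i : ℕ, (R ⧸ (m ^ (i + 1))) ⊗[K] V) i) t
      = levelIso K R m V i ((y : ∀ i : ℕ, (R ⧸ (m ^ (i + 1))) ⊗[K] V) i) t) : x = y := by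
  apply Subtype.ext
  funext i
  exact (levelIso K R m V i).injective (Finsupp.ext (h i))

/-- build an element of the completed tensor product from a decaying family of
coefficients indexed by the basis. -/
noncomputable def buildElem (ψ : (Module.Basis.ofVectorSpaceIndex K V) → R)
    (hψ : ∀ i : ℕ, {t | ψ t ∉ m ^ (i + 1)}.Finite) : completedTensor K R m V := by
  classical
  refine ⟨fun i => (levelIso K R m V i).symm
    (Finsupp.onFinset (hψ i).toFinset
      (fun t => (Submodule.Quotient.mk (ψ t) : R ⧸ (m ^ (i + 1)))) ?_), ?_⟩
  · intro t ht
    rw [Set.Finite.mem_toFinset]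
    intro hmem
    exact ht ((Submodule.Quotient.mk_eq_zero _).2 hmem)
  · intro i
    apply (levelIso K R m V i).injective
    apply Finsupp.ext
    intro t
    rw [levelIso_transition, LinearEquiv.apply_symm_apply, LinearEquiv.apply_symm_apply]
    rw [Finsupp.onFinset_apply, Finsupp.onFinset_apply, qmap_mk]

lemma buildElem_coord (ψ : (Module.Basis.ofVectorSpaceIndex K V) → R)
    (hψ : ∀ i : ℕ, {t | ψ t ∉ m ^ (i + 1)}.Finite) (i : ℕ) (t) :
    levelIso K R m V i
      ((buildElem K R m V ψ hψ : ∀ i : ℕ, (R ⧸ (m ^ (i + 1))) ⊗[K] V) i) t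
      = Submodule.Quotient.mk (ψ t) := by
  classical
  show (levelIso K R m V i) ((levelIso K R m V i).symm _) t = _
  rw [LinearEquiv.apply_symm_apply, Finsupp.onFinset_apply]

/-- Hard direction: an element all of whose components vanish up to level `n`
lies in `m^(n+1) • ⊤`. -/
theorem mem_smul_of_comps_zero [IsNoetherianRing R] [IsAdicComplete m R]
    (n : ℕ) (x : completedTensor K R m V)
    (hx : ∀ i, i ≤ n → (x : ∀ i : ℕ, (R ⧸ (m ^ (i + 1))) ⊗[K] V) i = 0) :
    x ∈ (m ^ (n + 1)) • (⊤ : Submodule R (completedTensor K R m V)) := by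
  classical
  obtain ⟨S, hS⟩ : (m ^ (n + 1)).FG := IsNoetherian.noetherian _
  obtain ⟨cAR, hAR⟩ := Ideal.exists_pow_inf_eq_pow_smul m ((m ^ (n + 1)) : Ideal R)
  set co : ∀ i : ℕ, (Module.Basis.ofVectorSpaceIndex K V) →₀ (R ⧸ (m ^ (i + 1))) :=
    fun i => levelIso K R m V i ((x : ∀ i : ℕ, (R ⧸ (m ^ (i + 1))) ⊗[K] V) i) with hco
  have hcompat : ∀ t i, qmap R m i (co (i + 1) t) = co i t := by
    intro t i
    rw [hco, ← levelIso_transition, x.2 i]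
  have hex : ∀ t, ∃ L : R, ∀ i, (Submodule.Quotient.mk L : R ⧸ (m ^ (i + 1))) = co i t :=
    fun t => liftCompat R m (fun i => co i t) (hcompat t)
  choose φ hφ using hex
  have hφzero : ∀ t i, co i t = 0 → φ t ∈ m ^ (i + 1) := by
    intro t i h
    have := hφ t i
    rw [h] at this
    exact (Submodule.Quotient.mk_eq_zero _).1 this
  have hφn : ∀ t, φ t ∈ m ^ (n + 1) := by
    intro t
    apply hφzero t n
    rw [hco]
    simp [hx n le_rfl]
  have hφfin : ∀ i : ℕ, {t | φ t ∉ m ^ (i + 1)}.Finite := by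
    intro i
    apply Set.Finite.subset (co i).support.finite_toSet
    intro t ht
    simp only [Set.mem_setOf_eq] at ht
    by_contra hns
    exact ht (hφzero t i (Finsupp.notMem_support_iff.1 (fun h => hns (Finset.mem_coe.2 h))))
  -- representation of each coefficient in terms of the generators of m^(n+1)
  have hrep : ∀ t, ∃ a : {y : R // y ∈ S} →₀ R,
      ((a.sum fun s r => r • (s : R)) = φ t) ∧
      (∀ j : ℕ, φ t ∈ m ^ j → ∀ s, a s ∈ m ^ (j - cAR)) := by
    intro t
    by_cases h0 : φ t = 0
    · exact ⟨0, by simp [h0], fun j _ s => by simp⟩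
    · have hnz : ∃ j, φ t ∉ m ^ j := by
        by_contra hcon
        push_neg at hcon
        apply h0
        apply IsHausdorff.haus (IsAdicComplete.toIsHausdorff (I := m) (M := R)) (φ t)
        intro j
        rw [SModEq.zero, ideal_smul_top]
        exact hcon j
      set N := Nat.find hnz with hN
      have hNpos : 0 < N := by
        rcases Nat.eq_zero_or_pos N with h | h
        · exfalso
          have := Nat.find_spec hnz
          rw [← hN, h] at this
          exact this (by simp [Ideal.one_eq_top])
        · exact h
      have hjlt : ∀ j, φ t ∈ m ^ j → j < N := by
        intro j hj
        by_contra hle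
        push_neg at hle
        exact (Nat.find_spec hnz) (Ideal.pow_le_pow_right hle hj)
      have hν : φ t ∈ m ^ (N - 1) := by
        have := Nat.find_min hnz (m := N - 1) (by omega)
        by_contra hcon
        exact this hcon
      have hmem : φ t ∈ (m ^ ((N - 1) - cAR)) •
          (Submodule.span R (Set.range (fun s : {y : R // y ∈ S} => (s : R)))) := by
        have hrange : Set.range (fun s : {y : R // y ∈ S} => (s : R)) = (S : Set R) := by
          ext y; simp [Subtype.range_coe_subtype]
        have hS' : Submodule.span R (S : Set R) = m ^ (n + 1) := hS
        rw [hrange, hS']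
        by_cases hc : cAR ≤ N - 1
        · have h1 := hAR (N - 1) hc
          have h2 : φ t ∈ (m ^ (N - 1) • ⊤ ⊓ m ^ (n + 1) : Submodule R R) := by
            rw [ideal_smul_top]
            exact ⟨hν, hφn t⟩
          rw [h1] at h2
          refine Submodule.smul_mono (le_refl _) ?_ h2
          rw [ideal_smul_top]
          exact inf_le_right
        · have : (N - 1) - cAR = 0 := by omega
          rw [this, pow_zero, Ideal.one_eq_top, Submodule.top_smul]
          exact hφn t
      obtain ⟨a, ha, hsum⟩ := (Submodule.mem_ideal_smul_span_iff_exists_sum _ _ _).1 hmem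
      refine ⟨a, hsum, fun j hj s => ?_⟩
      have hjN : j ≤ N - 1 := by
        have := hjlt j hj
        omega
      exact Ideal.pow_le_pow_right (by omega) (ha s)
  choose ρ hρsum hρmem using hrep
  set ψ : {y : R // y ∈ S} → (Module.Basis.ofVectorSpaceIndex K V) → R := fun s t => ρ t s with hψdef
  have hψfin : ∀ s, ∀ i : ℕ, {t | ψ s t ∉ m ^ (i + 1)}.Finite := by
    intro s i
    apply Set.Finite.subset (hφfin (i + cAR))
    intro t ht
    simp only [Set.mem_setOf_eq] at ht ⊢
    intro hmem
    apply ht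
    have := hρmem t (i + cAR + 1) hmem s
    rwa [show i + cAR + 1 - cAR = i + 1 by omega] at this
  have hx_eq : x = ∑ s ∈ S.attach, (s : R) • buildElem K R m V (ψ s) (hψfin s) := by
    apply ext_coords
    intro i t
    have hcoe : ((∑ s ∈ S.attach, (s : R) • buildElem K R m V (ψ s) (hψfin s) :
        completedTensor K R m V) : ∀ i : ℕ, (R ⧸ (m ^ (i + 1))) ⊗[K] V) i
        = ∑ s ∈ S.attach, (s : R) •
            ((buildElem K R m V (ψ s) (hψfin s) : ∀ i : ℕ, (R ⧸ (m ^ (i + 1))) ⊗[K] V) i) := by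
      rw [AddSubmonoidClass.coe_finset_sum, Finset.sum_apply]
      exact Finset.sum_congr rfl (fun s _ => rfl)
    rw [hcoe, map_sum, Finsupp.finset_sum_apply]
    have hterm : ∀ s ∈ S.attach, (levelIso K R m V i ((s : R) •
        ((buildElem K R m V (ψ s) (hψfin s) : ∀ i : ℕ, (R ⧸ (m ^ (i + 1))) ⊗[K] V) i))) t
        = (Submodule.Quotient.mk ((s : R) * ψ s t) : R ⧸ (m ^ (i + 1))) := by
      intro s _
      rw [map_smul, Finsupp.smul_apply, buildElem_coord, ← Submodule.Quotient.mk_smul,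
        smul_eq_mul]
    rw [Finset.sum_congr rfl hterm]
    have hsum2 : ∑ s ∈ S.attach, (s : R) * ψ s t = φ t := by
      rw [← hρsum t, Finsupp.sum_fintype]
      · rw [Finset.univ_eq_attach]
        exact Finset.sum_congr rfl (fun s _ => by rw [smul_eq_mul, mul_comm])
      · intro s; rw [zero_smul]
    have hfinal : (levelIso K R m V i) ((x : ∀ i : ℕ, (R ⧸ (m ^ (i + 1))) ⊗[K] V) i) t
        = Submodule.Quotient.mk (φ t) := (hφ t i).symm
    have hmk : (Submodule.Quotient.mk (∑ s ∈ S.attach, (s : R) * ψ s t) : R ⧸ (m ^ (i + 1)))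
        = ∑ s ∈ S.attach, (Submodule.Quotient.mk ((s : R) * ψ s t) : R ⧸ (m ^ (i + 1))) :=
      map_sum (Submodule.mkQ (m ^ (i + 1))) _ S.attach
    rw [hfinal, ← hmk]
    exact congrArg _ hsum2.symm
  rw [hx_eq]
  apply Submodule.sum_mem
  intro s _
  have hmem : (s : R) ∈ m ^ (n + 1) := by
    have hS' : Submodule.span R (S : Set R) = m ^ (n + 1) := hS
    rw [← hS']
    exact Submodule.subset_span s.2
  exact Submodule.smul_mem_smul hmem Submodule.mem_top

end CompletedTensor

section Filtration

variable {R : Type u} [CommRing R] {M : Type u} [AddCommGroup M] [Module R M] (I : Ideal R)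

lemma pow_smul_top_mono {a b : ℕ} (h : a ≤ b) :
    (I ^ b) • (⊤ : Submodule R M) ≤ (I ^ a) • ⊤ :=
  Submodule.smul_mono_left (Ideal.pow_le_pow_right h)

lemma map_mem_pow_smul_top (f : M →ₗ[R] M) {b : ℕ} {x : M}
    (hx : x ∈ (I ^ b) • (⊤ : Submodule R M)) : f x ∈ (I ^ b) • (⊤ : Submodule R M) := by
  refine Submodule.smul_induction_on hx (fun r hr y _ => ?_)
    (fun y z hy hz => by rw [map_add]; exact Submodule.add_mem _ hy hz)
  rw [map_smul]
  exact Submodule.smul_mem_smul hr Submodule.mem_top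

lemma map_mem_pow_smul_top_add {f : M →ₗ[R] M} {a : ℕ}
    (hf : ∀ y, f y ∈ (I ^ a) • (⊤ : Submodule R M)) {b : ℕ} {x : M}
    (hx : x ∈ (I ^ b) • (⊤ : Submodule R M)) : f x ∈ (I ^ (a + b)) • (⊤ : Submodule R M) := by
  refine Submodule.smul_induction_on hx (fun r hr y _ => ?_)
    (fun y z hy hz => by rw [map_add]; exact Submodule.add_mem _ hy hz)
  rw [map_smul]
  have h1 : r • f y ∈ (I ^ b) • ((I ^ a) • (⊤ : Submodule R M)) :=
    Submodule.smul_mem_smul hr (hf y)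
  have h2 : (I ^ b) • ((I ^ a) • (⊤ : Submodule R M)) = (I ^ (a + b)) • ⊤ := by
    rw [← Submodule.smul_assoc, Ideal.smul_eq_mul, ← pow_add, Nat.add_comm b a]
  rwa [h2] at h1

lemma pow_apply_mem_smul_top {f : M →ₗ[R] M}
    (hf : ∀ y, f y ∈ I • (⊤ : Submodule R M)) (k : ℕ) (hk : 1 ≤ k) (x : M) :
    (f ^ k) x ∈ (I ^ k) • (⊤ : Submodule R M) := by
  induction k with
  | zero => omega
  | succ k ih =>
      rcases Nat.eq_zero_or_pos k with h | h
      · subst h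
        simpa [pow_one] using hf x
      · have h1 : (f ^ (k + 1)) x = f ((f ^ k) x) := by
          rw [pow_succ']
          rfl
        rw [h1]
        have h2 := map_mem_pow_smul_top_add (a := 1) (I := I) (f := f)
          (by simpa [pow_one] using hf) (ih h)
        simpa [Nat.add_comm 1 k] using h2

end Filtration

section ExpAbstract

variable {R : Type u} [CommRing R] {M : Type u} [AddCommGroup M] [Module R M] (I : Ideal R)

lemma pow_succ_diff_identity (γ d : M →ₗ[R] M) (k : ℕ) (x : M) :
    ((γ + d) ^ (k + 1)) x - (γ ^ (k + 1)) x
      = (γ + d) (((γ + d) ^ k) x - (γ ^ k) x) + d ((γ ^ k) x) := by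
  rw [pow_succ', pow_succ', Module.End.mul_apply, Module.End.mul_apply, map_sub]
  simp only [LinearMap.add_apply]
  abel

lemma pow_diff_mem (γ d : M →ₗ[R] M) (n : ℕ)
    (hγ : ∀ y, γ y ∈ (I ^ 1) • (⊤ : Submodule R M))
    (hd : ∀ y, d y ∈ (I ^ (n + 1)) • (⊤ : Submodule R M)) :
    ∀ i, 2 ≤ i → ∀ x, ((γ + d) ^ i) x - (γ ^ i) x ∈ (I ^ (n + 2)) • (⊤ : Submodule R M) := by
  have hP : ∀ y, (γ + d) y ∈ (I ^ 1) • (⊤ : Submodule R M) := by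
    intro y
    rw [LinearMap.add_apply]
    exact Submodule.add_mem _ (hγ y)
      (pow_smul_top_mono I (by omega) (hd y))
  intro i hi
  induction i with
  | zero => omega
  | succ i ih =>
      intro x
      rcases Nat.lt_or_ge i 2 with h | h
      · -- i = 1, so i+1 = 2
        have hi1 : i = 1 := by omega
        subst hi1
        rw [pow_succ_diff_identity]
        have hdiff1 : ((γ + d) ^ 1) x - (γ ^ 1) x = d x := by
          simp [LinearMap.add_apply]
        rw [hdiff1]
        refine Submodule.add_mem _ ?_ ?_
        · have h2 := map_mem_pow_smul_top_add I hP (hd x)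
          rwa [show (1 : ℕ) + (n + 1) = n + 2 by omega] at h2
        · have h' : (γ ^ 1) x ∈ (I ^ 1) • (⊤ : Submodule R M) := by simpa [pow_one] using hγ x
          have h2 := map_mem_pow_smul_top_add I hd h'
          rwa [show (n + 1) + 1 = n + 2 by omega] at h2
      · rw [pow_succ_diff_identity]
        refine Submodule.add_mem _ (map_mem_pow_smul_top _ _ (ih h x)) ?_
        have hpow : (γ ^ i) x ∈ (I ^ 1) • (⊤ : Submodule R M) := by
          have h' := pow_apply_mem_smul_top (I := I) (f := γ)
            (by simpa [pow_one] using hγ) i (by omega) x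
          exact pow_smul_top_mono I (by omega) h'
        have h2' := map_mem_pow_smul_top_add I hd hpow
        rwa [show (n + 1) + 1 = n + 2 by omega] at h2'

lemma pow_diff_mem' (γ₁ γ₂ : M →ₗ[R] M) {a : ℕ}
    (hD : ∀ y, γ₂ y - γ₁ y ∈ (I ^ a) • (⊤ : Submodule R M)) :
    ∀ (i : ℕ) (x : M), (γ₂ ^ i) x - (γ₁ ^ i) x ∈ (I ^ a) • (⊤ : Submodule R M) := by
  intro i
  induction i with
  | zero => intro x; simp
  | succ i ih =>
      intro x
      have hsplit : (γ₂ ^ (i + 1)) x - (γ₁ ^ (i + 1)) x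
          = γ₂ ((γ₂ ^ i) x - (γ₁ ^ i) x) + (γ₂ ((γ₁ ^ i) x) - γ₁ ((γ₁ ^ i) x)) := by
        rw [pow_succ', pow_succ', Module.End.mul_apply, Module.End.mul_apply, map_sub]
        abel
      rw [hsplit]
      exact Submodule.add_mem _ (map_mem_pow_smul_top _ _ (ih x)) (hD _)

lemma exp_step (γ d : M →ₗ[R] M) (c : ℕ → R) (hc0 : c 0 = 1) (hc1 : c 1 = 1) (n : ℕ)
    (hγ : ∀ y, γ y ∈ (I ^ 1) • (⊤ : Submodule R M))
    (hd : ∀ y, d y ∈ (I ^ (n + 1)) • (⊤ : Submodule R M)) (x : M) :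
    (∑ i ∈ Finset.range (n + 2), c i • (γ + d) ^ i) x
      - (∑ i ∈ Finset.range (n + 2), c i • γ ^ i) x - d x
      ∈ (I ^ (n + 2)) • (⊤ : Submodule R M) := by
  classical
  rw [LinearMap.sum_apply, LinearMap.sum_apply, ← Finset.sum_sub_distrib]
  have hsum : ∀ i ∈ Finset.range (n + 2),
      (c i • (γ + d) ^ i) x - (c i • γ ^ i) x
        = c i • (((γ + d) ^ i) x - (γ ^ i) x) := by
    intro i _
    rw [LinearMap.smul_apply, LinearMap.smul_apply, smul_sub]
  rw [Finset.sum_congr rfl hsum]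
  have hdx : d x = ∑ i ∈ Finset.range (n + 2), (if i = 1 then d x else 0) := by
    rw [Finset.sum_ite_eq' (Finset.range (n + 2)) 1 (fun _ => d x)]
    simp
  rw [hdx, ← Finset.sum_sub_distrib]
  refine Submodule.sum_mem _ ?_
  intro i hi
  rcases Nat.eq_zero_or_pos i with h0 | hpos
  · subst h0
    simp
  · rcases Nat.lt_or_ge i 2 with h1 | h2
    · have : i = 1 := by omega
      subst this
      have hdiff1 : ((γ + d) ^ 1) x - (γ ^ 1) x = d x := by
        simp [LinearMap.add_apply]
      rw [hdiff1, hc1, one_smul, if_pos rfl]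
      simp
    · rw [if_neg (by omega)]
      have := pow_diff_mem I γ d n hγ hd i h2 x
      simpa using Submodule.smul_mem _ (c i) this

end ExpAbstract

section Exp

variable (K : Type u) [Field K]
variable (R : Type u) [CommRing R] [Algebra K R] (m : Ideal R)
variable (V : Type u) [AddCommGroup V] [Module K V]

/-- the exponential coefficients `1/i!` -/
noncomputable def expCoeff (i : ℕ) : R := algebraMap K R ((Nat.factorial i : K)⁻¹)

lemma expCoeff_zero : expCoeff K R 0 = 1 := by
  simp [expCoeff, Nat.factorial]

lemma expCoeff_one : expCoeff K R 1 = 1 := by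
  simp [expCoeff, Nat.factorial]

variable (g : completedTensor K R m V →ₗ[R] completedTensor K R m V)

/-- successive approximations of the logarithm of `g` -/
noncomputable def gseq : ℕ → (completedTensor K R m V →ₗ[R] completedTensor K R m V)
  | 0 => g - LinearMap.id
  | (n + 1) => gseq n +
      (g - ∑ i ∈ Finset.range (n + 2), expCoeff K R i • (gseq n) ^ i)

variable {K R m V g}

set_option maxHeartbeats 1000000 in
lemma gseq_spec
    (hg1 : ∀ x, g x - x ∈ (m ^ 1) • (⊤ : Submodule R (completedTensor K R m V))) :
    ∀ n : ℕ,
    (∀ x, gseq K R m V g n x ∈ (m ^ 1) • (⊤ : Submodule R (completedTensor K R m V))) ∧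
    (∀ x, g x - (∑ i ∈ Finset.range (n + 1), expCoeff K R i • (gseq K R m V g n) ^ i) x
      ∈ (m ^ (n + 1)) • (⊤ : Submodule R (completedTensor K R m V))) := by
  intro n
  induction n with
  | zero =>
      constructor
      · intro x
        show g x - LinearMap.id x ∈ _
        simpa using hg1 x
      · intro x
        have h1 : (∑ i ∈ Finset.range 1, expCoeff K R i • (gseq K R m V g 0) ^ i) x = x := by
          rw [Finset.range_one, Finset.sum_singleton, expCoeff_zero, one_smul, pow_zero,
            Module.End.one_apply]
        rw [h1]
        simpa using hg1 x
  | succ n ih =>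
      obtain ⟨ih1, ih2⟩ := ih
      -- the correction term
      set d : completedTensor K R m V →ₗ[R] completedTensor K R m V :=
        g - ∑ i ∈ Finset.range (n + 2), expCoeff K R i • (gseq K R m V g n) ^ i with hd_def
      have hd : ∀ x, d x ∈ (m ^ (n + 1)) • (⊤ : Submodule R (completedTensor K R m V)) := by
        intro x
        have hsplit : d x = (g x - (∑ i ∈ Finset.range (n + 1),
            expCoeff K R i • (gseq K R m V g n) ^ i) x)
            - expCoeff K R (n + 1) • ((gseq K R m V g n) ^ (n + 1)) x := by
          rw [hd_def]
          simp only [LinearMap.sub_apply, LinearMap.sum_apply, Finset.sum_range_succ,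
            LinearMap.smul_apply, LinearMap.add_apply]
          abel
        rw [hsplit]
        refine Submodule.sub_mem _ (ih2 x) (Submodule.smul_mem _ _ ?_)
        exact pow_apply_mem_smul_top (I := m) (f := gseq K R m V g n)
          (by simpa [pow_one] using ih1) (n + 1) (by omega) x
      have hgs : gseq K R m V g (n + 1) = gseq K R m V g n + d := rfl
      constructor
      · intro x
        rw [hgs, LinearMap.add_apply]
        exact Submodule.add_mem _ (ih1 x) (pow_smul_top_mono m (by omega) (hd x))
      · intro x
        have hkey := exp_step m (gseq K R m V g n) d (expCoeff K R)
          (expCoeff_zero K R) (expCoeff_one K R) n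
          ih1 hd x
        -- g x - Σ c_i (gseq (n+1))^i x  =  (g x - Σ c_i (gseq n)^i x - d x) - (Σ(γ+d) - Σγ - d x)
        have hrw : g x - (∑ i ∈ Finset.range (n + 2),
            expCoeff K R i • (gseq K R m V g (n + 1)) ^ i) x
            = (0 : completedTensor K R m V)
              - ((∑ i ∈ Finset.range (n + 2),
                  expCoeff K R i • (gseq K R m V g n + d) ^ i) x
                - (∑ i ∈ Finset.range (n + 2),
                  expCoeff K R i • (gseq K R m V g n) ^ i) x - d x)
              + ((g x - (∑ i ∈ Finset.range (n + 2),
                  expCoeff K R i • (gseq K R m V g n) ^ i) x) - d x) := by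
          rw [hgs]
          abel
        rw [hrw]
        have hz : (g x - (∑ i ∈ Finset.range (n + 2),
            expCoeff K R i • (gseq K R m V g n) ^ i) x) - d x = 0 := by
          rw [hd_def]
          simp only [LinearMap.sub_apply, LinearMap.sum_apply]
          abel
        rw [hz, add_zero, zero_sub]
        exact Submodule.neg_mem _ hkey
  
end Exp

section Exp2

variable {K : Type u} [Field K]
variable {R : Type u} [CommRing R] [Algebra K R] {m : Ideal R}
variable {V : Type u} [AddCommGroup V] [Module K V]
variable {g : completedTensor K R m V →ₗ[R] completedTensor K R m V}

lemma gseq_sub_mem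
    (hg1 : ∀ x, g x - x ∈ (m ^ 1) • (⊤ : Submodule R (completedTensor K R m V)))
    (n : ℕ) (x : completedTensor K R m V) :
    gseq K R m V g (n + 1) x - gseq K R m V g n x
      ∈ (m ^ (n + 1)) • (⊤ : Submodule R (completedTensor K R m V)) := by
  obtain ⟨ih1, ih2⟩ := gseq_spec hg1 n
  have hgs : gseq K R m V g (n + 1) x - gseq K R m V g n x
      = (g - ∑ i ∈ Finset.range (n + 2), expCoeff K R i • (gseq K R m V g n) ^ i) x := by
    show (gseq K R m V g n +
      (g - ∑ i ∈ Finset.range (n + 2), expCoeff K R i • (gseq K R m V g n) ^ i)) x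
        - gseq K R m V g n x = _
    rw [LinearMap.add_apply]
    abel
  rw [hgs]
  have hsplit : (g - ∑ i ∈ Finset.range (n + 2),
      expCoeff K R i • (gseq K R m V g n) ^ i) x
      = (g x - (∑ i ∈ Finset.range (n + 1),
          expCoeff K R i • (gseq K R m V g n) ^ i) x)
        - expCoeff K R (n + 1) • ((gseq K R m V g n) ^ (n + 1)) x := by
    simp only [LinearMap.sub_apply, LinearMap.sum_apply, Finset.sum_range_succ,
      LinearMap.smul_apply, LinearMap.add_apply]
    abel
  rw [hsplit]
  refine Submodule.sub_mem _ (ih2 x) (Submodule.smul_mem _ _ ?_)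
  exact pow_apply_mem_smul_top (I := m) (f := gseq K R m V g n)
    (by simpa [pow_one] using ih1) (n + 1) (by omega) x

lemma gseq_stab
    (hg1 : ∀ x, g x - x ∈ (m ^ 1) • (⊤ : Submodule R (completedTensor K R m V)))
    (n k : ℕ) (hnk : n ≤ k) (x : completedTensor K R m V) (i : ℕ) (hi : i ≤ n) :
    (gseq K R m V g k x : ∀ j : ℕ, (R ⧸ (m ^ (j + 1))) ⊗[K] V) i
      = (gseq K R m V g n x : ∀ j : ℕ, (R ⧸ (m ^ (j + 1))) ⊗[K] V) i := by
  induction k, hnk using Nat.le_induction with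
  | base => rfl
  | succ k hnk ih =>
      have hsub := gseq_sub_mem hg1 k x
      have hz := comps_zero_of_mem_smul K R m V (k + 1) _ hsub i (by omega)
      have hco : ((gseq K R m V g (k + 1) x - gseq K R m V g k x :
          completedTensor K R m V) : ∀ j : ℕ, (R ⧸ (m ^ (j + 1))) ⊗[K] V) i
          = (gseq K R m V g (k + 1) x : ∀ j : ℕ, (R ⧸ (m ^ (j + 1))) ⊗[K] V) i
            - (gseq K R m V g k x : ∀ j : ℕ, (R ⧸ (m ^ (j + 1))) ⊗[K] V) i := rfl
      rw [hco] at hz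
      have := sub_eq_zero.1 hz
      rw [this, ih]

/-- the limit of the successive approximations -/
noncomputable def glim
    (hg1 : ∀ x, g x - x ∈ (m ^ 1) • (⊤ : Submodule R (completedTensor K R m V))) :
    completedTensor K R m V →ₗ[R] completedTensor K R m V where
  toFun x := ⟨fun i => (gseq K R m V g i x : ∀ j : ℕ, (R ⧸ (m ^ (j + 1))) ⊗[K] V) i, by
    intro i
    have h1 := (gseq K R m V g (i + 1) x).2 i
    rw [h1]
    exact gseq_stab hg1 i (i + 1) (by omega) x i le_rfl⟩
  map_add' x y := by
    apply Subtype.ext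
    funext i
    show (gseq K R m V g i (x + y) : ∀ j : ℕ, (R ⧸ (m ^ (j + 1))) ⊗[K] V) i
      = (gseq K R m V g i x : ∀ j : ℕ, (R ⧸ (m ^ (j + 1))) ⊗[K] V) i
        + (gseq K R m V g i y : ∀ j : ℕ, (R ⧸ (m ^ (j + 1))) ⊗[K] V) i
    rw [map_add]
    rfl
  map_smul' r x := by
    apply Subtype.ext
    funext i
    show (gseq K R m V g i (r • x) : ∀ j : ℕ, (R ⧸ (m ^ (j + 1))) ⊗[K] V) i
      = r • (gseq K R m V g i x : ∀ j : ℕ, (R ⧸ (m ^ (j + 1))) ⊗[K] V) i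
    rw [map_smul]
    rfl

lemma glim_coord
    (hg1 : ∀ x, g x - x ∈ (m ^ 1) • (⊤ : Submodule R (completedTensor K R m V)))
    (x : completedTensor K R m V) (i : ℕ) :
    (glim hg1 x : ∀ j : ℕ, (R ⧸ (m ^ (j + 1))) ⊗[K] V) i
      = (gseq K R m V g i x : ∀ j : ℕ, (R ⧸ (m ^ (j + 1))) ⊗[K] V) i := rfl

lemma glim_sub_gseq [IsNoetherianRing R] [IsAdicComplete m R]
    (hg1 : ∀ x, g x - x ∈ (m ^ 1) • (⊤ : Submodule R (completedTensor K R m V)))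
    (n : ℕ) (x : completedTensor K R m V) :
    glim hg1 x - gseq K R m V g n x
      ∈ (m ^ (n + 1)) • (⊤ : Submodule R (completedTensor K R m V)) := by
  apply mem_smul_of_comps_zero
  intro i hi
  have hco : ((glim hg1 x - gseq K R m V g n x :
      completedTensor K R m V) : ∀ j : ℕ, (R ⧸ (m ^ (j + 1))) ⊗[K] V) i
      = (glim hg1 x : ∀ j : ℕ, (R ⧸ (m ^ (j + 1))) ⊗[K] V) i
        - (gseq K R m V g n x : ∀ j : ℕ, (R ⧸ (m ^ (j + 1))) ⊗[K] V) i := rfl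
  rw [hco, glim_coord, gseq_stab hg1 i n hi x i le_rfl, sub_self]

lemma glim_mem [IsNoetherianRing R] [IsAdicComplete m R]
    (hg1 : ∀ x, g x - x ∈ (m ^ 1) • (⊤ : Submodule R (completedTensor K R m V)))
    (x : completedTensor K R m V) :
    glim hg1 x ∈ (m ^ 1) • (⊤ : Submodule R (completedTensor K R m V)) := by
  have h1 : glim hg1 x = gseq K R m V g 0 x + (glim hg1 x - gseq K R m V g 0 x) := by abel
  rw [h1]
  exact Submodule.add_mem _ ((gseq_spec hg1 0).1 x)
    (pow_smul_top_mono m (by omega) (glim_sub_gseq hg1 0 x))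

lemma sum_iter_eq (γ : completedTensor K R m V →ₗ[R] completedTensor K R m V)
    (n : ℕ) (x : completedTensor K R m V) :
    (∑ i ∈ Finset.range (n + 1),
      (algebraMap K R ((Nat.factorial i : K)⁻¹)) • ((⇑γ)^[i] x))
      = (∑ i ∈ Finset.range (n + 1), expCoeff K R i • γ ^ i) x := by
  rw [LinearMap.sum_apply]
  refine Finset.sum_congr rfl (fun i _ => ?_)
  rw [LinearMap.smul_apply, Module.End.pow_apply]
  rfl

lemma glim_exp [IsNoetherianRing R] [IsAdicComplete m R]
    (hg1 : ∀ x, g x - x ∈ (m ^ 1) • (⊤ : Submodule R (completedTensor K R m V)))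
    (x : completedTensor K R m V) (n : ℕ) :
    g x - (∑ i ∈ Finset.range (n + 1), expCoeff K R i • (glim hg1) ^ i) x
      ∈ (m ^ (n + 1)) • (⊤ : Submodule R (completedTensor K R m V)) := by
  have hD : ∀ y, glim hg1 y - gseq K R m V g n y
      ∈ (m ^ (n + 1)) • (⊤ : Submodule R (completedTensor K R m V)) :=
    fun y => glim_sub_gseq hg1 n y
  have hdiff := pow_diff_mem' m (gseq K R m V g n) (glim hg1) hD
  have hrw : g x - (∑ i ∈ Finset.range (n + 1), expCoeff K R i • (glim hg1) ^ i) x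
      = (g x - (∑ i ∈ Finset.range (n + 1), expCoeff K R i • (gseq K R m V g n) ^ i) x)
        - ∑ i ∈ Finset.range (n + 1),
            expCoeff K R i • (((glim hg1) ^ i) x - ((gseq K R m V g n) ^ i) x) := by
    simp only [LinearMap.sum_apply, LinearMap.smul_apply, smul_sub,
      Finset.sum_sub_distrib]
    abel
  rw [hrw]
  refine Submodule.sub_mem _ ((gseq_spec hg1 n).2 x) (Submodule.sum_mem _ ?_)
  intro i _
  exact Submodule.smul_mem _ _ (hdiff i x)

end Exp2

/-- Let `K` be a field of characteristic `0`, `(R, 𝔪)` a parameter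
`K`-algebra, `V` a `K`-module and `M := R ⊗̂ V`, with augmentation `π : M → V` induced by
`R → K` (concretely, `π` is the `0`-th component of the inverse limit).  Let `g : M → M`
be an `R`-linear automorphism with `π ∘ g = π`.  Then there exists a unique `R`-linear
endomorphism `γ` of `M` with `γ(M) ⊆ 𝔪M` such that `g = exp(γ)`, in the sense that for
every `x ∈ M` and every `n ≥ 0`:
`g(x) − Σ_{i=0}^{n} γ^i(x)/i! ∈ 𝔪^{n+1} M`. -/
theorem stmt_18
    (K : Type u) [Field K] [CharZero K]
    (R : Type u) [CommRing R] [Algebra K R] [IsLocalRing R] [IsNoetherianRing R]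
    (hres : Function.Bijective (algebraMap K (IsLocalRing.ResidueField R)))
    [IsAdicComplete (IsLocalRing.maximalIdeal R) R]
    (V : Type u) [AddCommGroup V] [Module K V]
    (g : (completedTensor K R (IsLocalRing.maximalIdeal R) V) →ₗ[R]
          (completedTensor K R (IsLocalRing.maximalIdeal R) V))
    (hg : Function.Bijective g)
    (hπ : ∀ x : completedTensor K R (IsLocalRing.maximalIdeal R) V,
      (g x : ∀ i : ℕ, (R ⧸ ((IsLocalRing.maximalIdeal R) ^ (i + 1))) ⊗[K] V) 0
        = (x : ∀ i : ℕ, (R ⧸ ((IsLocalRing.maximalIdeal R) ^ (i + 1))) ⊗[K] V) 0) :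
    ∃! γ : (completedTensor K R (IsLocalRing.maximalIdeal R) V) →ₗ[R]
            (completedTensor K R (IsLocalRing.maximalIdeal R) V),
      (∀ x, γ x ∈ (IsLocalRing.maximalIdeal R) •
          (⊤ : Submodule R (completedTensor K R (IsLocalRing.maximalIdeal R) V))) ∧
      (∀ (x : completedTensor K R (IsLocalRing.maximalIdeal R) V) (n : ℕ),
        g x - ∑ i ∈ Finset.range (n + 1),
            (algebraMap K R ((Nat.factorial i : K)⁻¹)) • ((⇑γ)^[i] x)
          ∈ ((IsLocalRing.maximalIdeal R) ^ (n + 1)) •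
              (⊤ : Submodule R (completedTensor K R (IsLocalRing.maximalIdeal R) V))) := by
  -- step 1 : `g - id` maps into `(IsLocalRing.maximalIdeal R) • ⊤`
  have hg1 : ∀ x, g x - x ∈ ((IsLocalRing.maximalIdeal R) ^ 1) •
      (⊤ : Submodule R (completedTensor K R (IsLocalRing.maximalIdeal R) V)) := by
    intro x
    apply mem_smul_of_comps_zero K R (IsLocalRing.maximalIdeal R) V 0 (g x - x)
    intro i hi
    interval_cases i
    have hco : ((g x - x : completedTensor K R (IsLocalRing.maximalIdeal R) V) :
        ∀ j : ℕ, (R ⧸ ((IsLocalRing.maximalIdeal R) ^ (j + 1))) ⊗[K] V) 0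
        = (g x : ∀ j : ℕ, (R ⧸ ((IsLocalRing.maximalIdeal R) ^ (j + 1))) ⊗[K] V) 0
          - (x : ∀ j : ℕ, (R ⧸ ((IsLocalRing.maximalIdeal R) ^ (j + 1))) ⊗[K] V) 0 := rfl
    rw [hco, hπ x, sub_self]
  set γ := glim hg1 with hγdef
  have hγmem : ∀ x, γ x ∈ ((IsLocalRing.maximalIdeal R) ^ 1) • (⊤ : Submodule R (completedTensor K R (IsLocalRing.maximalIdeal R) V)) :=
    fun x => glim_mem hg1 x
  have hγexp : ∀ (x : completedTensor K R (IsLocalRing.maximalIdeal R) V) (n : ℕ),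
      g x - ∑ i ∈ Finset.range (n + 1),
        (algebraMap K R ((Nat.factorial i : K)⁻¹)) • ((⇑γ)^[i] x)
        ∈ ((IsLocalRing.maximalIdeal R) ^ (n + 1)) • (⊤ : Submodule R (completedTensor K R (IsLocalRing.maximalIdeal R) V)) := by
    intro x n
    rw [sum_iter_eq]
    exact glim_exp hg1 x n
  refine ⟨γ, ⟨fun x => ?_, hγexp⟩, ?_⟩
  · have := hγmem x
    rwa [pow_one] at this
  · -- uniqueness
    intro γ' ⟨h1', h2'⟩
    have hstep : ∀ (n : ℕ) (x : completedTensor K R (IsLocalRing.maximalIdeal R) V),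
        γ' x - γ x ∈ ((IsLocalRing.maximalIdeal R) ^ (n + 1)) • (⊤ : Submodule R (completedTensor K R (IsLocalRing.maximalIdeal R) V)) := by
      intro n
      induction n with
      | zero =>
          intro x
          rw [pow_one]
          refine Submodule.sub_mem _ (h1' x) ?_
          have := hγmem x
          rwa [pow_one] at this
      | succ n ih =>
          intro x
          set D : completedTensor K R (IsLocalRing.maximalIdeal R) V →ₗ[R] completedTensor K R (IsLocalRing.maximalIdeal R) V := γ' - γ with hDdef
          have hD : ∀ y, D y ∈ ((IsLocalRing.maximalIdeal R) ^ (n + 1)) •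
              (⊤ : Submodule R (completedTensor K R (IsLocalRing.maximalIdeal R) V)) := by
            intro y
            rw [hDdef, LinearMap.sub_apply]
            exact ih y
          have hkey := exp_step (IsLocalRing.maximalIdeal R) γ D (expCoeff K R) (expCoeff_zero K R) (expCoeff_one K R) n
            hγmem hD x
          have hγD : γ + D = γ' := by
            rw [hDdef]
            exact add_sub_cancel γ γ'
          rw [hγD] at hkey
          have hm1 : g x - (∑ i ∈ Finset.range (n + 2), expCoeff K R i • γ' ^ i) x
              ∈ ((IsLocalRing.maximalIdeal R) ^ (n + 2)) • (⊤ : Submodule R (completedTensor K R (IsLocalRing.maximalIdeal R) V)) := by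
            have := h2' x (n + 1)
            rwa [sum_iter_eq] at this
          have hm2 : g x - (∑ i ∈ Finset.range (n + 2), expCoeff K R i • γ ^ i) x
              ∈ ((IsLocalRing.maximalIdeal R) ^ (n + 2)) • (⊤ : Submodule R (completedTensor K R (IsLocalRing.maximalIdeal R) V)) := by
            have := hγexp x (n + 1)
            rwa [sum_iter_eq] at this
          have hDapp : D x = γ' x - γ x := by
            rw [hDdef, LinearMap.sub_apply]
          rw [hDapp] at hkey
          have hfin : γ' x - γ x
              = (g x - (∑ i ∈ Finset.range (n + 2), expCoeff K R i • γ ^ i) x)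
                - (g x - (∑ i ∈ Finset.range (n + 2), expCoeff K R i • γ' ^ i) x)
                - ((∑ i ∈ Finset.range (n + 2), expCoeff K R i • γ' ^ i) x
                  - (∑ i ∈ Finset.range (n + 2), expCoeff K R i • γ ^ i) x
                  - (γ' x - γ x)) := by
            abel
          rw [hfin]
          exact Submodule.sub_mem _ (Submodule.sub_mem _ hm2 hm1) hkey
    apply LinearMap.ext
    intro x
    have hz : γ' x - γ x = 0 := by
      apply Subtype.ext
      funext i
      have := comps_zero_of_mem_smul K R (IsLocalRing.maximalIdeal R) V (i + 1) _ (hstep i x) i le_rfl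
      have hco : ((γ' x - γ x : completedTensor K R (IsLocalRing.maximalIdeal R) V) :
          ∀ j : ℕ, (R ⧸ ((IsLocalRing.maximalIdeal R) ^ (j + 1))) ⊗[K] V) i
          = (γ' x : ∀ j : ℕ, (R ⧸ ((IsLocalRing.maximalIdeal R) ^ (j + 1))) ⊗[K] V) i
            - (γ x : ∀ j : ℕ, (R ⧸ ((IsLocalRing.maximalIdeal R) ^ (j + 1))) ⊗[K] V) i := rfl
      rw [this]
      rfl
    exact sub_eq_zero.1 hz
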